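/- Let φ : ℝ^k → (-∞, +∞] be proper convex l.s.c., let u', v' ∈ Dom(∂φ), z ∈ ℝ^k, and t < 0 such that u' + t•z ∈ Dom(∂φ). Then (φ(u'+tz) - φ(u'))/t ≥ (φ(u' + t(u'-v')) - φ(u'))/t - |∂φ|₀(u'+tz)·|z - (u'-v')|, where |∂φ|₀(w) denotes the minimal norm of elements of ∂φ(w). -/

import Mathlib

open Filter Topology

variable {k : ℕ}

/-- Difference quotient `(φ(u + t•z) - φ(u))/t` in the extended reals. -/
noncomputable def DQ (φ : EuclideanSpace ℝ (Fin k) → EReal)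
    (u z : EuclideanSpace ℝ (Fin k)) (t : ℝ) : EReal :=
  ((t⁻¹ : ℝ) : EReal) * (φ (u + t • z) - φ u)

/-- Convexity of an `EReal`-valued function. -/
def ConvexE (φ : EuclideanSpace ℝ (Fin k) → EReal) : Prop :=
  ∀ x y : EuclideanSpace ℝ (Fin k), ∀ t : ℝ, 0 ≤ t → t ≤ 1 →
    φ ((1 - t) • x + t • y) ≤ ((1 - t : ℝ) : EReal) * φ x + (t : EReal) * φ y

/-- Right directional derivative `φ'₊(u; z) = inf_{t>0} (φ(u+tz)-φ(u))/t`. -/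
noncomputable def dplus (φ : EuclideanSpace ℝ (Fin k) → EReal)
    (u z : EuclideanSpace ℝ (Fin k)) : EReal :=
  ⨅ t : {t : ℝ // 0 < t}, DQ φ u z t

/-- Left directional derivative `φ'₋(u; z) = sup_{t<0} (φ(u+tz)-φ(u))/t`. -/
noncomputable def dminus (φ : EuclideanSpace ℝ (Fin k) → EReal)
    (u z : EuclideanSpace ℝ (Fin k)) : EReal :=
  ⨆ t : {t : ℝ // t < 0}, DQ φ u z t

/-- The subdifferential `∂φ(u)`. -/
def subdiff (φ : EuclideanSpace ℝ (Fin k) → EReal)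
    (u : EuclideanSpace ℝ (Fin k)) : Set (EuclideanSpace ℝ (Fin k)) :=
  {us | ∀ v, ((inner ℝ us (v - u) : ℝ) : EReal) + φ u ≤ φ v}

/-- `φ'_*(u; z)`: liminf of `φ'₋(v; z)` over `v → u`, `v ∈ Dom(∂φ)`. -/
noncomputable def dstarLow (φ : EuclideanSpace ℝ (Fin k) → EReal)
    (u z : EuclideanSpace ℝ (Fin k)) : EReal :=
  Filter.liminf (fun v => dminus φ v z) (𝓝[{v | (subdiff φ v).Nonempty}] u)

/-- `φ'^*(u; z)`: limsup of `φ'₊(v; z)` over `v → u`, `v ∈ Dom(∂φ)`. -/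
noncomputable def dstarUp (φ : EuclideanSpace ℝ (Fin k) → EReal)
    (u z : EuclideanSpace ℝ (Fin k)) : EReal :=
  Filter.limsup (fun v => dplus φ v z) (𝓝[{v | (subdiff φ v).Nonempty}] u)

/-- `|∂φ|₀(w)`: the minimal norm of elements of `∂φ(w)` (as a real number). -/
noncomputable def minNorm (φ : EuclideanSpace ℝ (Fin k) → EReal)
    (w : EuclideanSpace ℝ (Fin k)) : ℝ :=
  sInf (norm '' subdiff φ w)

/-! With `w = u' + t z`, `y = u' + t (u' - v')` and `w* ∈ ∂φ(w)`, the subgradient inequality gives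
`φ(y) ≥ φ(w) + ⟨w*, y - w⟩ ≥ φ(w) - ‖w*‖ |t| ‖z - (u' - v')‖`. Minimising over `w*` and dividing
by `t < 0` (which reverses the inequality) gives the claim; if `φ(y) = ⊤` the left side is `⊥`. -/

theorem le_sInf_norm_image_mul {E : Type*} [Norm E] {S : Set E} (hS : S.Nonempty) {L c : ℝ}
    (hc : 0 ≤ c) (h : ∀ s ∈ S, L ≤ ‖s‖ * c) : L ≤ sInf (norm '' S) * c := by
  rw [mul_comm, ← smul_eq_mul, ← Real.sInf_smul_of_nonneg hc]
  refine le_csInf ((hS.image _).smul_set) ?_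
  rintro _ ⟨_, ⟨s, hs, rfl⟩, rfl⟩
  simpa only [smul_eq_mul, mul_comm c] using h s hs

section Subdifferential

variable {φ : EuclideanSpace ℝ (Fin k) → EReal} {u w v : EuclideanSpace ℝ (Fin k)}

theorem exists_coe_eq_of_subdiff_nonempty (hbot : φ u ≠ ⊥) (hproper : ∃ x, φ x ≠ ⊤)
    (hu : (subdiff φ u).Nonempty) : ∃ a : ℝ, φ u = a := by
  obtain ⟨x, hx⟩ := hproper
  obtain ⟨us, hus⟩ := hu
  have htop : φ u ≠ ⊤ := fun htop ↦ hx (top_le_iff.mp (by simpa [htop] using hus x))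
  exact ⟨(φ u).toReal, (EReal.coe_toReal htop hbot).symm⟩

theorem sub_minNorm_mul_norm_le (hw : (subdiff φ w).Nonempty) {b c : ℝ} (hb : φ w = b)
    (hc : φ v = c) : b - minNorm φ w * ‖v - w‖ ≤ c := by
  suffices b - c ≤ minNorm φ w * ‖v - w‖ by linarith
  refine le_sInf_norm_image_mul hw (norm_nonneg _) fun ws hws ↦ ?_
  have hsub : inner ℝ ws (v - w) + b ≤ c := by
    have := hws v
    rwa [hb, hc, ← EReal.coe_add, EReal.coe_le_coe_iff] at this
  have hinner : -(‖ws‖ * ‖v - w‖) ≤ inner ℝ ws (v - w) :=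
    neg_le_of_abs_le (abs_real_inner_le_norm ws (v - w))
  linarith

theorem DQ_eq_coe {z : EuclideanSpace ℝ (Fin k)} {t a b : ℝ} (ha : φ u = a)
    (hb : φ (u + t • z) = b) : DQ φ u z t = ((t⁻¹ * (b - a) : ℝ) : EReal) := by
  rw [DQ, ha, hb, ← EReal.coe_sub, ← EReal.coe_mul]

theorem DQ_eq_bot_of_neg {z : EuclideanSpace ℝ (Fin k)} {t a : ℝ} (ht : t < 0) (ha : φ u = a)
    (htop : φ (u + t • z) = ⊤) : DQ φ u z t = ⊥ := by
  rw [DQ, ha, htop, EReal.top_sub_coe]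
  exact EReal.coe_mul_top_of_neg (inv_lt_zero.mpr ht)

end Subdifferential

theorem diffQuot_perturb_general {k : ℕ} (φ : EuclideanSpace ℝ (Fin k) → EReal)
    (hbot : ∀ x, φ x ≠ ⊥) (hproper : ∃ x, φ x ≠ ⊤)
    (u' v' z : EuclideanSpace ℝ (Fin k))
    (hu' : (subdiff φ u').Nonempty)
    (t : ℝ) (ht : t < 0) (htz : (subdiff φ (u' + t • z)).Nonempty) :
    DQ φ u' (u' - v') t - ((minNorm φ (u' + t • z) * ‖z - (u' - v')‖ : ℝ) : EReal)
      ≤ DQ φ u' z t := by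
  obtain ⟨a, ha⟩ := exists_coe_eq_of_subdiff_nonempty (hbot u') hproper hu'
  obtain ⟨b, hb⟩ := exists_coe_eq_of_subdiff_nonempty (hbot _) hproper htz
  rw [DQ_eq_coe ha hb]
  generalize hy : φ (u' + t • (u' - v')) = e
  induction e using EReal.rec with
  | bot => exact absurd hy (hbot _)
  | top => simp [DQ_eq_bot_of_neg ht ha hy]
  | coe c =>
    rw [DQ_eq_coe ha hy, ← EReal.coe_sub, EReal.coe_le_coe_iff]
    have hdist : ‖u' + t • (u' - v') - (u' + t • z)‖ = -t * ‖z - (u' - v')‖ := by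
      rw [show u' + t • (u' - v') - (u' + t • z) = t • ((u' - v') - z) by module, norm_smul,
        norm_sub_rev, Real.norm_of_nonpos ht.le]
    have hlower := sub_minNorm_mul_norm_le htz hb hy
    rw [hdist] at hlower
    have hquot : (c - b) / t ≤ minNorm φ (u' + t • z) * ‖z - (u' - v')‖ := by
      rw [div_le_iff_of_neg ht]
      linarith
    calc t⁻¹ * (c - a) - minNorm φ (u' + t • z) * ‖z - (u' - v')‖
        = t⁻¹ * (b - a) + ((c - b) / t - minNorm φ (u' + t • z) * ‖z - (u' - v')‖) := by ring
      _ ≤ t⁻¹ * (b - a) := by linarith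

theorem diffQuot_perturb {k : ℕ} (φ : EuclideanSpace ℝ (Fin k) → EReal)
    (hconv : ConvexE φ) (hbot : ∀ x, φ x ≠ ⊥) (hproper : ∃ x, φ x ≠ ⊤)
    (hlsc : LowerSemicontinuous φ)
    (u' v' z : EuclideanSpace ℝ (Fin k))
    (hu' : (subdiff φ u').Nonempty) (hv' : (subdiff φ v').Nonempty)
    (t : ℝ) (ht : t < 0) (htz : (subdiff φ (u' + t • z)).Nonempty) :
    DQ φ u' (u' - v') t - ((minNorm φ (u' + t • z) * ‖z - (u' - v')‖ : ℝ) : EReal)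
      ≤ DQ φ u' z t :=
  diffQuot_perturb_general φ hbot hproper u' v' z hu' t ht htz
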